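/- arXiv:2412.05008 — 3 statements merged into one kernel-verified Lean document; each statement's English description precedes it below -/
import Mathlib

section
/- Let A be a unital C*-algebra and H a finite-dimensional complex Hilbert space. Then for every positive P ∈ B(H), every P-C*-extreme point of CP^{(P)}(A,B(H)) is a linear extreme point of CP^{(P)}(A,B(H)). -/
open scoped ComplexOrder

noncomputable section

section Defs

variable {A H : Type*}
variable [NormedAddCommGroup H] [InnerProductSpace ℂ H]

/-- An operator on a complex inner product space is positive:
`0 ≤ ⟪x, T x⟫` for all `x`. -/
def IsPosOp (T : H →L[ℂ] H) : Prop := ∀ x : H, 0 ≤ (inner ℂ x (T x) : ℂ)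

variable [Ring A] [StarRing A] [Algebra ℂ A]

/-- Complete positivity of a linear map `Φ : A → B(H)`:
`∑_{i,j} ⟪h i, Φ(a i* a j) (h j)⟫ ≥ 0` for all finite families. -/
def IsCPMap (Φ : A →ₗ[ℂ] (H →L[ℂ] H)) : Prop :=
  ∀ (n : ℕ) (a : Fin n → A) (h : Fin n → H),
    0 ≤ ∑ i, ∑ j, (inner ℂ (h i) ((Φ (star (a i) * a j)) (h j)) : ℂ)

/-- `CP^{(P)}(A, B(H))`: the CP maps `Φ` with `Φ 1 = P`. -/
def CPP (P : H →L[ℂ] H) : Set (A →ₗ[ℂ] (H →L[ℂ] H)) := {Φ | IsCPMap Φ ∧ Φ 1 = P}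

/-- `CCP(A, B(H))`: the contractive CP maps, i.e. CP maps with `Φ 1 ≤ 1`. -/
def CCPmaps : Set (A →ₗ[ℂ] (H →L[ℂ] H)) := {Φ | IsCPMap Φ ∧ IsPosOp (1 - Φ 1)}

variable [CompleteSpace H]

/-- `Ad_T : X ↦ T* X T`, as a linear map on `B(H)`. -/
def conjAd (T : H →L[ℂ] H) : (H →L[ℂ] H) →ₗ[ℂ] (H →L[ℂ] H) where
  toFun X := star T * X * T
  map_add' X Y := by simp [add_mul, mul_add]
  map_smul' c X := by simp [mul_smul_comm, smul_mul_assoc]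

/-- `Φ ∈ CP^{(P)}` is a `P`-`C*`-extreme point of `CP^{(P)}(A, B(H))`:
whenever `Φ = ∑ Ad_{T j} ∘ Φs j` is a proper `P`-`C*`-convex combination of members of
`CP^{(P)}`, each `Φs j` equals `Ad_{S j} ∘ Φ` for some invertible `S j`. -/
def IsPCExtreme (P : H →L[ℂ] H) (Φ : A →ₗ[ℂ] (H →L[ℂ] H)) : Prop :=
  Φ ∈ CPP (A := A) P ∧
  ∀ (n : ℕ) (T : Fin n → (H →L[ℂ] H)) (Φs : Fin n → (A →ₗ[ℂ] (H →L[ℂ] H))),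
    (∀ j, IsUnit (T j)) → (∀ j, Φs j ∈ CPP (A := A) P) →
    (∑ j, star (T j) * P * T j) = P →
    Φ = ∑ j, (conjAd (T j)).comp (Φs j) →
    ∀ j, ∃ S : H →L[ℂ] H, IsUnit S ∧ Φs j = (conjAd S).comp Φ

/-- `Φ ∈ C` is a `C*`-extreme point of the `C*`-convex set `C`:
whenever `Φ = ∑ Ad_{T j} ∘ Φs j` is a proper `C*`-convex combination of members of `C`,
each `Φs j` is unitarily equivalent to `Φ`. -/
def IsCstarExtreme (C : Set (A →ₗ[ℂ] (H →L[ℂ] H))) (Φ : A →ₗ[ℂ] (H →L[ℂ] H)) : Prop :=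
  Φ ∈ C ∧
  ∀ (n : ℕ) (T : Fin n → (H →L[ℂ] H)) (Φs : Fin n → (A →ₗ[ℂ] (H →L[ℂ] H))),
    (∀ j, IsUnit (T j)) → (∀ j, Φs j ∈ C) →
    (∑ j, star (T j) * T j) = 1 →
    Φ = ∑ j, (conjAd (T j)).comp (Φs j) →
    ∀ j, ∃ U : H →L[ℂ] H, U ∈ unitary (H →L[ℂ] H) ∧ Φs j = (conjAd U).comp Φ

/-- `Φ ∈ C` is a linear extreme point of the convex set `C`. -/
def IsLinExtreme (C : Set (A →ₗ[ℂ] (H →L[ℂ] H))) (Φ : A →ₗ[ℂ] (H →L[ℂ] H)) : Prop :=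
  Φ ∈ C ∧
  ∀ (n : ℕ) (t : Fin n → ℝ) (Φs : Fin n → (A →ₗ[ℂ] (H →L[ℂ] H))),
    (∀ j, 0 < t j ∧ t j < 1) → (∀ j, Φs j ∈ C) → (∑ j, t j) = 1 →
    Φ = ∑ j, (t j : ℂ) • Φs j →
    ∀ j, Φs j = Φ

end Defs

/-!
Write `Φ = ∑ tⱼ Φⱼ` as the `P`-`C*`-convex combination with coefficients `√tⱼ • 1`. Extremality
gives invertible `Sⱼ` with `Φⱼ = Ad_{Sⱼ} ∘ Φ`, hence `Sⱼ* P Sⱼ = P` and `Φ(a) = ∑ tⱼ Sⱼ* Φ(a) Sⱼ`.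
Complete positivity confines every `Φ(a)` to the range of `P`, on which the operators
`Rⱼ = P^{1/2} Sⱼ P^{-1/2}` are unitary, and `X = P^{-1/2} Φ(a) P^{-1/2}` satisfies
`X = ∑ tⱼ Rⱼ* X Rⱼ`. In finite dimension the trace of the positive operator
`∑ tⱼ (Rⱼ* X Rⱼ - X)* (Rⱼ* X Rⱼ - X)` is then `0`, so `Rⱼ* X Rⱼ = X` for every `j`, i.e. `Φⱼ = Φ`.
-/

open scoped InnerProductSpace

theorem Complex.eq_zero_of_forall_nonneg_add_conj_mul_add_mul {c z z' : ℂ}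
    (h : ∀ s : ℂ, 0 ≤ c + starRingEnd ℂ s * z + s * z') : z = 0 ∧ z' = 0 := by
  have him (s : ℂ) := (Complex.nonneg_iff.mp (h s)).2
  have h0 := him 0
  have h1 := him 1
  have hI := him Complex.I
  simp only [map_zero, map_one, Complex.conj_I, zero_mul, one_mul, add_zero, zero_add, neg_mul,
    Complex.add_im, Complex.neg_im, Complex.mul_im, Complex.I_re, Complex.I_im] at h0 h1 hI
  have hz' : z' = starRingEnd ℂ z :=
    Complex.ext (by rw [Complex.conj_re]; linarith) (by rw [Complex.conj_im]; linarith)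
  subst hz'
  suffices hz : Complex.normSq z = 0 by simp [Complex.normSq_eq_zero.mp hz]
  by_contra hz
  have hpos : 0 < Complex.normSq z := lt_of_le_of_ne (Complex.normSq_nonneg z) (Ne.symm hz)
  -- `s = -t z` with `2 t |z|² = Re c + 1` makes the real part negative
  set t : ℝ := (c.re + 1) / (2 * Complex.normSq z)
  have hs : c + starRingEnd ℂ (-t * z) * z + -t * z * starRingEnd ℂ z = c - (c.re + 1 : ℝ) := by
    simp only [map_mul, map_neg, Complex.conj_ofReal]
    rw [mul_assoc, mul_comm (starRingEnd ℂ z), Complex.mul_conj, mul_assoc, Complex.mul_conj]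
    simp only [t]
    push_cast
    field_simp
    ring
  have := (Complex.nonneg_iff.mp (h (-t * z))).1
  rw [hs, Complex.sub_re, Complex.ofReal_re] at this
  linarith

theorem IsPosOp.nonneg {H : Type*} [NormedAddCommGroup H] [InnerProductSpace ℂ H]
    {P : H →L[ℂ] H} (hP : IsPosOp P) : 0 ≤ P := by
  rw [ContinuousLinearMap.nonneg_iff_isPositive, ContinuousLinearMap.isPositive_iff_complex]
  intro x
  obtain ⟨hre, him⟩ := Complex.nonneg_iff.mp (hP x)
  have hsymm : ⟪P x, x⟫_ℂ = ⟪x, P x⟫_ℂ := by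
    rw [← inner_conj_symm]
    exact Complex.conj_eq_iff_im.mpr him.symm
  rw [hsymm]
  exact ⟨Complex.ext (by simp) (by simp [him]), hre⟩

namespace IsCPMap

variable {A H : Type*} [NormedAddCommGroup H] [InnerProductSpace ℂ H]
  [Ring A] [StarRing A] [Algebra ℂ A] {Φ : A →ₗ[ℂ] (H →L[ℂ] H)}

theorem isPosOp_apply_one (hΦ : IsCPMap Φ) : IsPosOp (Φ 1) := fun x ↦ by
  simpa using hΦ 1 ![1] ![x]

theorem inner_apply_eq_zero_of_apply_one (hΦ : IsCPMap Φ) {v : H} (hv : Φ 1 v = 0)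
    (b : A) (w : H) : ⟪v, Φ b w⟫_ℂ = 0 ∧ ⟪w, Φ (star b) v⟫_ℂ = 0 := by
  refine Complex.eq_zero_of_forall_nonneg_add_conj_mul_add_mul (c := ⟪w, Φ (star b * b) w⟫_ℂ)
    fun s ↦ ?_
  have h := hΦ 2 ![1, b] ![s • v, w]
  simp only [Fin.sum_univ_two, Matrix.cons_val_zero, Matrix.cons_val_one,
    star_one, one_mul, mul_one, map_smul, inner_smul_left, inner_smul_right, hv,
    inner_zero_right, mul_zero, zero_add] at h
  linear_combination h

theorem apply_eq_zero_of_apply_one (hΦ : IsCPMap Φ) {v : H} (hv : Φ 1 v = 0) (a : A) :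
    Φ a v = 0 := by
  have h := (hΦ.inner_apply_eq_zero_of_apply_one hv (star a) (Φ a v)).2
  rwa [star_star, inner_self_eq_zero] at h

theorem apply_mul_eq_of_apply_one_mul {Q : H →L[ℂ] H} (hΦ : IsCPMap Φ) (hQ : Φ 1 * Q = Φ 1)
    (a : A) : Φ a * Q = Φ a := by
  ext v
  have hv : Φ 1 (Q v - v) = 0 := by
    rw [map_sub, ← mul_apply_eq_comp, hQ, sub_self]
  have := hΦ.apply_eq_zero_of_apply_one hv a
  rwa [map_sub, sub_eq_zero] at this

variable [CompleteSpace H]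

theorem mul_apply_eq_of_apply_one_mul {Q : H →L[ℂ] H} (hΦ : IsCPMap Φ) (hQ : Φ 1 * Q = Φ 1)
    (hQsa : IsSelfAdjoint Q) (a : A) : Q * Φ a = Φ a := by
  ext v
  refine ext_inner_left ℂ fun w ↦ ?_
  have hw : Φ 1 (Q w - w) = 0 := by
    rw [map_sub, ← mul_apply_eq_comp, hQ, sub_self]
  have := (hΦ.inner_apply_eq_zero_of_apply_one hw a v).1
  rw [inner_sub_left, sub_eq_zero] at this
  rw [mul_apply_eq_comp, ← this, ← ContinuousLinearMap.adjoint_inner_left,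
    ← ContinuousLinearMap.star_eq_adjoint, hQsa.star_eq]

theorem conjAd_comp (hΦ : IsCPMap Φ) (S : H →L[ℂ] H) : IsCPMap ((conjAd S).comp Φ) := by
  intro n a h
  simpa [conjAd, ContinuousLinearMap.star_eq_adjoint, ContinuousLinearMap.adjoint_inner_right]
    using hΦ n a (fun i ↦ S (h i))

end IsCPMap

theorem LinearMap.IsPositive.trace_eq_zero_iff {𝕜 E : Type*} [RCLike 𝕜] [NormedAddCommGroup E]
    [InnerProductSpace 𝕜 E] [FiniteDimensional 𝕜 E] {T : E →ₗ[𝕜] E} (hT : T.IsPositive) :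
    trace 𝕜 E T = 0 ↔ T = 0 := by
  classical
  let b := stdOrthonormalBasis 𝕜 E
  rw [trace_eq_matrix_trace 𝕜 b.toBasis, ((posSemidef_toMatrix_iff b).mpr hT).trace_eq_zero_iff,
    LinearEquiv.map_eq_zero_iff]

namespace ContinuousLinearMap

variable {H : Type*} [NormedAddCommGroup H] [InnerProductSpace ℂ H]

local notation "tr" => LinearMap.trace ℂ H

theorem eq_zero_of_nonneg_of_trace_eq_zero [FiniteDimensional ℂ H] {T : H →L[ℂ] H} (hT : 0 ≤ T)
    (htr : tr T = 0) : T = 0 := by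
  rw [nonneg_iff_isPositive, ← isPositive_toLinearMap_iff] at hT
  exact coe_injective (hT.trace_eq_zero_iff.mp htr)

theorem finite_spectrum_real [FiniteDimensional ℂ H] (T : H →L[ℂ] H) : (spectrum ℝ T).Finite := by
  rw [← spectrum.preimage_algebraMap ℂ]
  refine Set.Finite.preimage (algebraMap ℝ ℂ).injective.injOn ?_
  rw [← AlgEquiv.spectrum_eq (Module.End.toContinuousLinearMap H).symm T]
  exact Module.End.finite_spectrum _

variable [CompleteSpace H]

theorem cfc_mul_cfc [FiniteDimensional ℂ H] (f g : ℝ → ℝ) (T : H →L[ℂ] H) :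
    cfc f T * cfc g T = cfc (fun x ↦ f x * g x) T :=
  (cfc_mul f g T (T.finite_spectrum_real.continuousOn f)
    (T.finite_spectrum_real.continuousOn g)).symm

theorem trace_star_mul_mul_eq {Q U M : H →L[ℂ] H} (hU : U * star U = Q)
    (hMQ : M * Q = M) : tr (star U * M * U).toLinearMap = tr M := by
  rw [toLinearMap_mul, LinearMap.trace_mul_comm, ← toLinearMap_mul, ← mul_assoc, hU,
    toLinearMap_mul, LinearMap.trace_mul_comm, ← toLinearMap_mul, hMQ]

/-- `P ^ (-1/2)` on the range of a positive `P`, and `0` on its kernel (as `(√0)⁻¹ = 0`). -/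
def invSqrt (P : H →L[ℂ] H) : H →L[ℂ] H := cfc (fun x : ℝ ↦ (√x)⁻¹) P

/-- The orthogonal projection onto the range of a positive `P`. -/
def supportProj (P : H →L[ℂ] H) : H →L[ℂ] H := cfc Real.sqrt P * P.invSqrt

def sqrtConj (P S : H →L[ℂ] H) : H →L[ℂ] H := cfc Real.sqrt P * S * P.invSqrt

theorem isSelfAdjoint_invSqrt (P : H →L[ℂ] H) : IsSelfAdjoint P.invSqrt := cfc_predicate _ P

theorem commute_cfc_sqrt_invSqrt (P : H →L[ℂ] H) : Commute (cfc Real.sqrt P) P.invSqrt :=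
  cfc_commute_cfc _ _ P

theorem star_sqrtConj_mul_mul_sqrtConj {P M : H →L[ℂ] H} (S : H →L[ℂ] H)
    (hQM : P.supportProj * M = M) (hMQ : M * P.supportProj = M) :
    star (P.sqrtConj S) * (P.invSqrt * M * P.invSqrt) * P.sqrtConj S =
      P.invSqrt * (star S * M * S) * P.invSqrt := by
  have hs : IsSelfAdjoint (cfc Real.sqrt P) := cfc_predicate _ _
  have hsf (X : H →L[ℂ] H) : cfc Real.sqrt P * (P.invSqrt * X) = P.supportProj * X := by
    rw [← mul_assoc, supportProj]
  have hfs (X : H →L[ℂ] H) : P.invSqrt * (cfc Real.sqrt P * X) = P.supportProj * X := by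
    rw [← mul_assoc, ← (commute_cfc_sqrt_invSqrt P).eq, supportProj]
  have hQM' (X : H →L[ℂ] H) : P.supportProj * (M * X) = M * X := by rw [← mul_assoc, hQM]
  have hMQ' (X : H →L[ℂ] H) : M * (P.supportProj * X) = M * X := by rw [← mul_assoc, hMQ]
  simp only [sqrtConj, star_mul, hs.star_eq, (isSelfAdjoint_invSqrt P).star_eq, mul_assoc, hsf,
    hfs, hQM', hMQ']

theorem eq_of_invSqrt_mul_mul_invSqrt_eq {P M N : H →L[ℂ] H} (hQM : P.supportProj * M = M)
    (hMQ : M * P.supportProj = M) (hQN : P.supportProj * N = N) (hNQ : N * P.supportProj = N)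
    (h : P.invSqrt * M * P.invSqrt = P.invSqrt * N * P.invSqrt) : M = N := by
  have key (X : H →L[ℂ] H) :
      cfc Real.sqrt P * (P.invSqrt * X * P.invSqrt) * cfc Real.sqrt P =
        P.supportProj * X * P.supportProj := by
    rw [supportProj]
    nth_rewrite 2 [(commute_cfc_sqrt_invSqrt P).eq]
    simp only [mul_assoc]
  have hM := key M
  rw [h, key, hQN, hNQ, hQM, hMQ] at hM
  exact hM.symm

variable [FiniteDimensional ℂ H]

theorem mul_star_eq_of_star_mul_eq {Q R : H →L[ℂ] H} (hQ : IsStarProjection Q)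
    (hRR : star R * R = Q) (hQR : Q * R = R) (hRQ : R * Q = R) : R * star R = Q := by
  -- `Q - R R*` is an idempotent of trace `tr Q - tr (R* R) = 0`
  have hRQ' : star R * Q = star R := by
    rw [← hQ.isSelfAdjoint.star_eq, ← star_mul, hQR]
  have hE : IsIdempotentElem ((Q - R * star R : H →L[ℂ] H) : H →ₗ[ℂ] H) := by
    have hRR' : R * star R * (R * star R) = R * star R := by
      rw [mul_assoc, ← mul_assoc (star R), hRR, ← mul_assoc, hRQ]
    have hQRR : Q * (R * star R) = R * star R := by rw [← mul_assoc, hQR]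
    have hRRQ : R * star R * Q = R * star R := by rw [mul_assoc, hRQ']
    rw [IsIdempotentElem, ← toLinearMap_mul, sub_mul, mul_sub, mul_sub,
      hQ.isIdempotentElem.eq, hQRR, hRRQ, hRR', sub_self, sub_zero]
  have htr : tr (Q - R * star R : H →L[ℂ] H) = 0 := by
    rw [toLinearMap_sub, map_sub, toLinearMap_mul, LinearMap.trace_mul_comm, ← toLinearMap_mul,
      hRR, sub_self]
  exact (sub_eq_zero.mp <| coe_injective <|
    LinearMap.IsIdempotentElem.eq_zero_of_trace_eq_zero hE htr).symm

theorem star_mul_mul_eq_of_sum_smul_eq {ι : Type*} [Fintype ι] {t : ι → ℝ}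
    (ht : ∀ j, 0 < t j) (ht1 : ∑ j, t j = 1) {Q X : H →L[ℂ] H} {U : ι → H →L[ℂ] H}
    (hU : ∀ j, U j * star (U j) = Q) (hQX : Q * X = X) (hXQ : X * Q = X)
    (hX : ∑ j, (t j : ℂ) • (star (U j) * X * U j) = X) (j : ι) :
    star (U j) * X * U j = X := by
  set Y := fun j ↦ star (U j) * X * U j
  have ht1' : ∑ j, (t j : ℂ) = 1 := by exact_mod_cast ht1
  have hYY (j) : star (Y j) * Y j = star (U j) * (star X * X) * U j := by
    simp only [Y, star_mul, star_star, mul_assoc]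
    rw [← mul_assoc (U j) (star (U j)), hU, ← mul_assoc Q, hQX]
  have hXY : ∑ j, (t j : ℂ) • star (Y j) = star X := by
    simpa only [star_sum, star_smul, Complex.star_def, Complex.conj_ofReal] using congrArg star hX
  have hsum : ∑ j, (t j : ℂ) • (star (Y j - X) * (Y j - X)) =
      ∑ j, (t j : ℂ) • (star (Y j) * Y j) - star X * X := by
    have hB : ∑ j, (t j : ℂ) • (star (Y j) * X) = star X * X := by
      simp only [← smul_mul_assoc, ← Finset.sum_mul, hXY]
    have hC : ∑ j, (t j : ℂ) • (star X * Y j) = star X * X :=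
      calc ∑ j, (t j : ℂ) • (star X * Y j) = star X * ∑ j, (t j : ℂ) • Y j := by
            simp only [Finset.mul_sum, mul_smul_comm]
        _ = star X * X := congrArg _ hX
    have hD : ∑ j, (t j : ℂ) • (star X * X) = star X * X := by
      rw [← Finset.sum_smul, ht1', one_smul]
    simp only [star_sub, sub_mul, mul_sub, smul_sub, Finset.sum_sub_distrib, hB, hC, hD]
    abel
  have htr : tr (∑ j, (t j : ℂ) • (star (Y j - X) * (Y j - X)) : H →L[ℂ] H) = 0 := by
    have hXXQ : star X * X * Q = star X * X := by rw [mul_assoc, hXQ]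
    simp only [hsum, hYY, toLinearMap_sub, toLinearMap_sum, toLinearMap_smul, map_sub, map_sum,
      map_smul, trace_star_mul_mul_eq (hU _) hXXQ, smul_eq_mul, ← Finset.sum_mul, ht1', one_mul,
      sub_self]
  have hnonneg (j) : 0 ≤ (t j : ℂ) • (star (Y j - X) * (Y j - X)) :=
    smul_nonneg (by exact_mod_cast (ht j).le) (star_mul_self_nonneg _)
  have hzero := (Finset.sum_eq_zero_iff_of_nonneg fun j _ ↦ hnonneg j).mp
    (eq_zero_of_nonneg_of_trace_eq_zero (Finset.sum_nonneg fun j _ ↦ hnonneg j) htr) j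
    (Finset.mem_univ j)
  rw [smul_eq_zero, Complex.ofReal_eq_zero, CStarRing.star_mul_self_eq_zero_iff] at hzero
  exact sub_eq_zero.mp (hzero.resolve_left (ht j).ne')

theorem cfc_sqrt_mul_self {P : H →L[ℂ] H} (hP : 0 ≤ P) :
    cfc Real.sqrt P * cfc Real.sqrt P = P := by
  rw [cfc_mul_cfc]
  exact (cfc_congr fun x hx ↦ Real.mul_self_sqrt (spectrum_nonneg_of_nonneg hP hx)).trans
    (cfc_id' ℝ P)

theorem cfc_sqrt_mul_invSqrt_mul_cfc_sqrt (P : H →L[ℂ] H) :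
    cfc Real.sqrt P * P.invSqrt * cfc Real.sqrt P = cfc Real.sqrt P := by
  simp only [invSqrt, cfc_mul_cfc, mul_inv_mul_cancel]

theorem invSqrt_mul_cfc_sqrt_mul_invSqrt (P : H →L[ℂ] H) :
    P.invSqrt * cfc Real.sqrt P * P.invSqrt = P.invSqrt := by
  simp only [invSqrt, cfc_mul_cfc]
  congr! 2 with x
  simpa using mul_inv_mul_cancel (√x)⁻¹

theorem isStarProjection_supportProj (P : H →L[ℂ] H) : IsStarProjection P.supportProj where
  isIdempotentElem := by
    rw [IsIdempotentElem, supportProj, ← mul_assoc, cfc_sqrt_mul_invSqrt_mul_cfc_sqrt]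
  isSelfAdjoint := by
    rw [IsSelfAdjoint, supportProj, star_mul, (isSelfAdjoint_invSqrt P).star_eq,
      (cfc_predicate Real.sqrt P : IsSelfAdjoint _).star_eq, (commute_cfc_sqrt_invSqrt P).eq]

theorem mul_supportProj {P : H →L[ℂ] H} (hP : 0 ≤ P) : P * P.supportProj = P :=
  calc P * P.supportProj
      = cfc Real.sqrt P * cfc Real.sqrt P * (cfc Real.sqrt P * P.invSqrt) := by
        rw [cfc_sqrt_mul_self hP, supportProj]
    _ = cfc Real.sqrt P * (cfc Real.sqrt P * P.invSqrt * cfc Real.sqrt P) := by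
        nth_rewrite 1 [(commute_cfc_sqrt_invSqrt P).eq]
        simp only [mul_assoc]
    _ = P := by rw [cfc_sqrt_mul_invSqrt_mul_cfc_sqrt, cfc_sqrt_mul_self hP]

theorem invSqrt_mul_mul_invSqrt {P : H →L[ℂ] H} (hP : 0 ≤ P) :
    P.invSqrt * P * P.invSqrt = P.supportProj :=
  calc P.invSqrt * P * P.invSqrt = P.invSqrt * (cfc Real.sqrt P * cfc Real.sqrt P) * P.invSqrt := by
        rw [cfc_sqrt_mul_self hP]
    _ = P.supportProj * P.supportProj := by
        rw [supportProj]
        nth_rewrite 1 [(commute_cfc_sqrt_invSqrt P).eq]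
        simp only [mul_assoc]
    _ = P.supportProj := (isStarProjection_supportProj P).isIdempotentElem.eq

theorem supportProj_mul_invSqrt (P : H →L[ℂ] H) : P.supportProj * P.invSqrt = P.invSqrt := by
  rw [supportProj, (commute_cfc_sqrt_invSqrt P).eq, invSqrt_mul_cfc_sqrt_mul_invSqrt]

theorem invSqrt_mul_supportProj (P : H →L[ℂ] H) : P.invSqrt * P.supportProj = P.invSqrt := by
  rw [supportProj, ← mul_assoc, invSqrt_mul_cfc_sqrt_mul_invSqrt]

theorem star_sqrtConj_mul_self {P S : H →L[ℂ] H} (hP : 0 ≤ P) (hS : star S * P * S = P) :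
    star (P.sqrtConj S) * P.sqrtConj S = P.supportProj := by
  have hs : IsSelfAdjoint (cfc Real.sqrt P) := cfc_predicate _ _
  calc star (P.sqrtConj S) * P.sqrtConj S
      = P.invSqrt * (star S * (cfc Real.sqrt P * cfc Real.sqrt P) * S) * P.invSqrt := by
        simp only [sqrtConj, star_mul, hs.star_eq, (isSelfAdjoint_invSqrt P).star_eq, mul_assoc]
    _ = P.supportProj := by rw [cfc_sqrt_mul_self hP, hS, invSqrt_mul_mul_invSqrt hP]

theorem supportProj_mul_sqrtConj (P S : H →L[ℂ] H) :
    P.supportProj * P.sqrtConj S = P.sqrtConj S := by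
  simp only [supportProj, sqrtConj, ← mul_assoc, cfc_sqrt_mul_invSqrt_mul_cfc_sqrt]

theorem sqrtConj_mul_supportProj (P S : H →L[ℂ] H) :
    P.sqrtConj S * P.supportProj = P.sqrtConj S := by
  rw [sqrtConj, mul_assoc, invSqrt_mul_supportProj]

end ContinuousLinearMap

open ContinuousLinearMap in
theorem IsCPMap.conj_eq_of_sum_smul_conj_eq {A H : Type*} [NormedAddCommGroup H]
    [InnerProductSpace ℂ H] [FiniteDimensional ℂ H] [Ring A] [StarRing A]
    [Algebra ℂ A] {Φ : A →ₗ[ℂ] (H →L[ℂ] H)} (hΦ : IsCPMap Φ) {ι : Type*} [Fintype ι]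
    {t : ι → ℝ} (ht : ∀ j, 0 < t j) (ht1 : ∑ j, t j = 1) {S : ι → H →L[ℂ] H}
    (hS : ∀ j, star (S j) * Φ 1 * S j = Φ 1)
    (hsum : ∀ a, ∑ j, (t j : ℂ) • (star (S j) * Φ a * S j) = Φ a) (j : ι) (a : A) :
    star (S j) * Φ a * S j = Φ a := by
  set P := Φ 1
  have hP : 0 ≤ P := hΦ.isPosOp_apply_one.nonneg
  have hQ := P.isStarProjection_supportProj
  have hsupp {Ψ : A →ₗ[ℂ] (H →L[ℂ] H)} (hΨ : IsCPMap Ψ) (hΨ1 : Ψ 1 = P) (b : A) :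
      P.supportProj * Ψ b = Ψ b ∧ Ψ b * P.supportProj = Ψ b := by
    have hPQ : Ψ 1 * P.supportProj = Ψ 1 := by rw [hΨ1]; exact mul_supportProj hP
    exact ⟨hΨ.mul_apply_eq_of_apply_one_mul hPQ hQ.isSelfAdjoint b,
      hΨ.apply_mul_eq_of_apply_one_mul hPQ b⟩
  obtain ⟨hQΦ, hΦQ⟩ := hsupp hΦ rfl a
  obtain ⟨hQΦS, hΦSQ⟩ := hsupp (hΦ.conjAd_comp (S j)) (hS j) a
  refine eq_of_invSqrt_mul_mul_invSqrt_eq hQΦS hΦSQ hQΦ hΦQ ?_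
  rw [← star_sqrtConj_mul_mul_sqrtConj (S j) hQΦ hΦQ]
  have hR (j) : P.sqrtConj (S j) * star (P.sqrtConj (S j)) = P.supportProj :=
    mul_star_eq_of_star_mul_eq hQ (star_sqrtConj_mul_self hP (hS j))
      (supportProj_mul_sqrtConj _ _) (sqrtConj_mul_supportProj _ _)
  refine star_mul_mul_eq_of_sum_smul_eq ht ht1 hR ?_ ?_ ?_ j
  · rw [← mul_assoc, ← mul_assoc, supportProj_mul_invSqrt]
  · rw [mul_assoc, invSqrt_mul_supportProj]
  · simp only [star_sqrtConj_mul_mul_sqrtConj _ hQΦ hΦQ]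
    conv_rhs => rw [← hsum a, Finset.mul_sum, Finset.sum_mul]
    simp only [mul_smul_comm, smul_mul_assoc]

theorem IsPCExtreme.exists_eq_conjAd_comp_of_eq_sum_smul {A H : Type*} [NormedAddCommGroup H]
    [InnerProductSpace ℂ H] [CompleteSpace H] [Ring A] [StarRing A] [Algebra ℂ A]
    {P : H →L[ℂ] H} {Φ : A →ₗ[ℂ] (H →L[ℂ] H)} (hΦ : IsPCExtreme P Φ) {n : ℕ} {t : Fin n → ℝ}
    (ht : ∀ j, 0 < t j) (ht1 : ∑ j, t j = 1) {Φs : Fin n → A →ₗ[ℂ] (H →L[ℂ] H)}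
    (hΦs : ∀ j, Φs j ∈ CPP P) (hdecomp : Φ = ∑ j, (t j : ℂ) • Φs j) (j : Fin n) :
    ∃ S : H →L[ℂ] H, IsUnit S ∧ Φs j = (conjAd S).comp Φ := by
  set T : Fin n → H →L[ℂ] H := fun j ↦ ((√(t j) : ℝ) : ℂ) • 1
  have hT (j) (X : H →L[ℂ] H) : star (T j) * X * T j = (t j : ℂ) • X := by
    simp only [T, star_smul, star_one, Complex.star_def, Complex.conj_ofReal, smul_mul_assoc,
      one_mul, mul_smul_comm, mul_one, smul_smul, ← Complex.ofReal_mul,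
      Real.mul_self_sqrt (ht j).le]
  have ht1' : ∑ j, (t j : ℂ) = 1 := by exact_mod_cast ht1
  refine hΦ.2 n T Φs (fun j ↦ ?_) hΦs ?_ ?_ j
  · show IsUnit (((√(t j) : ℝ) : ℂ) • (1 : H →L[ℂ] H))
    rw [← Algebra.algebraMap_eq_smul_one]
    exact (Complex.ofReal_ne_zero.mpr (Real.sqrt_pos.mpr (ht j)).ne').isUnit.map _
  · simp only [hT, ← Finset.sum_smul, ht1', one_smul]
  · ext1 a
    simp [hdecomp, conjAd, hT]

theorem stmt11_general {A : Type*} [NormedRing A] [StarRing A] [NormedAlgebra ℂ A]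
    {H : Type*} [NormedAddCommGroup H] [InnerProductSpace ℂ H] [FiniteDimensional ℂ H] :
    ∀ P : H →L[ℂ] H, IsPosOp P →
      ∀ Φ : A →ₗ[ℂ] (H →L[ℂ] H), IsPCExtreme P Φ → IsLinExtreme (CPP (A := A) P) Φ := by
  intro P _ Φ hΦ
  refine ⟨hΦ.1, fun n t Φs ht hΦs ht1 hdecomp j ↦ ?_⟩
  choose S _ hS using
    hΦ.exists_eq_conjAd_comp_of_eq_sum_smul (fun j ↦ (ht j).1) ht1 hΦs hdecomp
  have hSP (j) : star (S j) * Φ 1 * S j = Φ 1 := by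
    simpa [hS j, conjAd, hΦ.1.2] using (hΦs j).2
  have hsum (a) : ∑ j, (t j : ℂ) • (star (S j) * Φ a * S j) = Φ a := by
    conv_rhs => rw [hdecomp]
    simp [hS, conjAd]
  rw [hS j]
  ext1 a
  exact hΦ.1.1.conj_eq_of_sum_smul_conj_eq (fun j ↦ (ht j).1) ht1 hSP hsum j a

/-- Proposition `prop-Cstar-linear-ext-finite`. If `H` is finite-dimensional,
then for every positive `P ∈ B(H)`, every `P`-`C*`-extreme point of `CP^{(P)}(A,B(H))` is a
linear extreme point of `CP^{(P)}(A,B(H))`. -/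
theorem stmt11 {A : Type*} [NormedRing A] [StarRing A] [CStarRing A] [NormedAlgebra ℂ A] [StarModule ℂ A] [CompleteSpace A]
    {H : Type*} [NormedAddCommGroup H] [InnerProductSpace ℂ H] [CompleteSpace H] [FiniteDimensional ℂ H] :
    ∀ P : H →L[ℂ] H, IsPosOp P →
      ∀ Φ : A →ₗ[ℂ] (H →L[ℂ] H), IsPCExtreme P Φ → IsLinExtreme (CPP (A := A) P) Φ :=
  stmt11_general
end
end

section
/- Let A be a unital C*-algebra, H a complex Hilbert space, and let C be any C*-convex subset of CP(A,B(H)) with UCP(A,B(H)) ⊆ C ⊆ CCP(A,B(H)). Then the set of C*-extreme points of UCP(A,B(H)) equals the intersection of UCP(A,B(H)) with the set of C*-extreme points of C. -/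
open scoped ComplexOrder

noncomputable section

/-!
A decomposition `Φ = ∑ Ad_{T j} ∘ Φs j` of a unital `Φ` into members of `CCP` forces every `Φs j`
to be unital: `∑ T j* (1 - Φs j 1) T j = ∑ T j* T j - Φ 1 = 0` is a sum of positive operators,
so each summand vanishes, and since `T j` is onto, `1 - Φs j 1 = 0`. Hence a proper
`C*`-convex decomposition in `C` of a unital map is already one in `UCP`.
-/

section Positivity

variable {H : Type*} [NormedAddCommGroup H] [InnerProductSpace ℂ H]

lemma ContinuousLinearMap.eq_zero_of_forall_inner_apply_self_eq_zero {D : H →L[ℂ] H}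
    (hD : ∀ y, inner ℂ y (D y) = 0) : D = 0 := by
  have : (D : H →ₗ[ℂ] H) = 0 :=
    (inner_map_self_eq_zero _).mp fun x => by
      rw [← inner_conj_symm, ContinuousLinearMap.coe_coe, hD, map_zero]
  exact ContinuousLinearMap.coe_injective this

variable [CompleteSpace H]

lemma inner_star_mul_mul_apply (T D : H →L[ℂ] H) (x : H) :
    inner ℂ x ((star T * D * T) x) = inner ℂ (T x) (D (T x)) := by
  simp [ContinuousLinearMap.star_eq_adjoint, ContinuousLinearMap.adjoint_inner_right]

lemma eq_zero_of_sum_star_mul_mul_eq_zero {ι : Type*} [Fintype ι] {T D : ι → H →L[ℂ] H}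
    (hD : ∀ j, IsPosOp (D j)) (hT : ∀ j, Function.Surjective (T j))
    (h0 : ∑ j, star (T j) * D j * T j = 0) (j : ι) : D j = 0 := by
  refine ContinuousLinearMap.eq_zero_of_forall_inner_apply_self_eq_zero fun y => ?_
  obtain ⟨x, rfl⟩ := hT j y
  have hsum : ∑ k, inner ℂ x ((star (T k) * D k * T k) x) = 0 := by
    rw [← inner_sum, ← _root_.sum_apply, h0, _root_.zero_apply, inner_zero_right]
  have hnonneg : ∀ k ∈ Finset.univ, 0 ≤ inner ℂ x ((star (T k) * D k * T k) x) := fun k _ => by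
    rw [inner_star_mul_mul_apply]
    exact hD k _
  simpa only [inner_star_mul_mul_apply] using
    (Finset.sum_eq_zero_iff_of_nonneg hnonneg).mp hsum j (Finset.mem_univ j)

end Positivity

section Extreme

variable {A H : Type*} [NormedAddCommGroup H] [InnerProductSpace ℂ H] [CompleteSpace H]
  [Ring A] [Algebra ℂ A]

lemma map_one_eq_one_of_eq_sum_conjAd_comp {n : ℕ} {Φ : A →ₗ[ℂ] (H →L[ℂ] H)}
    {T : Fin n → H →L[ℂ] H} {Φs : Fin n → A →ₗ[ℂ] (H →L[ℂ] H)} (hΦ : Φ 1 = 1)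
    (hΦs : ∀ j, IsPosOp (1 - Φs j 1)) (hT : ∀ j, IsUnit (T j))
    (hsum : ∑ j, star (T j) * T j = 1) (hdecomp : Φ = ∑ j, (conjAd (T j)).comp (Φs j))
    (j : Fin n) : Φs j 1 = 1 := by
  have hΦ1 : ∑ j, star (T j) * Φs j 1 * T j = 1 := by
    simpa [hΦ, conjAd, LinearMap.sum_apply] using (congrArg (· 1) hdecomp).symm
  have hdefect : ∑ j, star (T j) * (1 - Φs j 1) * T j = 0 := by
    simp only [mul_sub, sub_mul, mul_one, Finset.sum_sub_distrib, hsum, hΦ1, sub_self]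
  have hsurj : ∀ j, Function.Surjective (T j) := fun j y =>
    ⟨(hT j).unit⁻¹.val y, congrArg (· y) (hT j).unit.mul_inv⟩
  exact (sub_eq_zero.mp (eq_zero_of_sum_star_mul_mul_eq_zero hΦs hsurj hdefect j)).symm

lemma IsCstarExtreme.of_subset {C D : Set (A →ₗ[ℂ] (H →L[ℂ] H))} {Φ : A →ₗ[ℂ] (H →L[ℂ] H)}
    (hΦ : IsCstarExtreme C Φ) (hDC : D ⊆ C) (hΦD : Φ ∈ D) : IsCstarExtreme D Φ :=
  ⟨hΦD, fun n T Φs hT hΦs => hΦ.2 n T Φs hT fun j => hDC (hΦs j)⟩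

variable [StarRing A]

lemma IsCstarExtreme.of_ucp_of_subset_ccp {C : Set (A →ₗ[ℂ] (H →L[ℂ] H))}
    {Φ : A →ₗ[ℂ] (H →L[ℂ] H)} (hΦ : IsCstarExtreme (CPP 1) Φ) (hUC : CPP 1 ⊆ C)
    (hCC : C ⊆ CCPmaps) : IsCstarExtreme C Φ := by
  refine ⟨hUC hΦ.1, fun n T Φs hT hΦs hsum hdecomp => hΦ.2 n T Φs hT (fun j => ?_) hsum hdecomp⟩
  exact ⟨(hCC (hΦs j)).1, map_one_eq_one_of_eq_sum_conjAd_comp hΦ.1.2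
    (fun k => (hCC (hΦs k)).2) hT hsum hdecomp j⟩

end Extreme

theorem stmt14_general {A : Type*} [NormedRing A] [StarRing A] [NormedAlgebra ℂ A]
    {H : Type*} [NormedAddCommGroup H] [InnerProductSpace ℂ H] [CompleteSpace H]
    (C : Set (A →ₗ[ℂ] (H →L[ℂ] H)))
    (hUC : CPP (A := A) (1 : H →L[ℂ] H) ⊆ C)
    (hCC : C ⊆ CCPmaps (A := A) (H := H)) :
    {Φ : A →ₗ[ℂ] (H →L[ℂ] H) | IsCstarExtreme (CPP (A := A) (1 : H →L[ℂ] H)) Φ} =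
      CPP (A := A) (1 : H →L[ℂ] H) ∩
        {Φ : A →ₗ[ℂ] (H →L[ℂ] H) | IsCstarExtreme C Φ} := by
  ext Φ
  exact ⟨fun hΦ => ⟨hΦ.1, IsCstarExtreme.of_ucp_of_subset_ccp hΦ hUC hCC⟩,
    fun ⟨hΦ, hΦC⟩ => IsCstarExtreme.of_subset hΦC hUC hΦ⟩

/-- Proposition `prop-UCP-C-Cstar`. For any `C*`-convex set `C` with
`UCP(A,B(H)) ⊆ C ⊆ CCP(A,B(H))`, the `C*`-extreme points of `UCP(A,B(H))` are exactly the
members of `UCP(A,B(H))` that are `C*`-extreme points of `C`. -/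
theorem stmt14 {A : Type*} [NormedRing A] [StarRing A] [CStarRing A] [NormedAlgebra ℂ A] [StarModule ℂ A] [CompleteSpace A]
    {H : Type*} [NormedAddCommGroup H] [InnerProductSpace ℂ H] [CompleteSpace H]
    (C : Set (A →ₗ[ℂ] (H →L[ℂ] H)))
    (hconv : ∀ (n : ℕ) (T : Fin n → (H →L[ℂ] H)) (Φs : Fin n → (A →ₗ[ℂ] (H →L[ℂ] H))),
      (∀ j, Φs j ∈ C) → (∑ j, star (T j) * T j) = 1 →
      (∑ j, (conjAd (T j)).comp (Φs j)) ∈ C)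
    (hUC : CPP (A := A) (1 : H →L[ℂ] H) ⊆ C)
    (hCC : C ⊆ CCPmaps (A := A) (H := H)) :
    {Φ : A →ₗ[ℂ] (H →L[ℂ] H) | IsCstarExtreme (CPP (A := A) (1 : H →L[ℂ] H)) Φ} =
      CPP (A := A) (1 : H →L[ℂ] H) ∩
        {Φ : A →ₗ[ℂ] (H →L[ℂ] H) | IsCstarExtreme C Φ} :=
  stmt14_general C hUC hCC

end
end

section
/- Let A be a unital C*-algebra, H a complex Hilbert space, P ∈ B(H) an orthogonal projection, S ∈ B(H) invertible, and Φ, Ψ ∈ CP^{(P)}(A,B(H)) such that Ψ = Ad_S∘Φ. Then there exists a unitary U ∈ B(H) such that Ψ = Ad_U∘Φ. -/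
open scoped ComplexOrder

noncomputable section

/-!
Complete positivity of `Φ` applied to the families `(1, b)` and `(t • x, y)` with `P x = 0`
gives a quadratic inequality in `t ∈ ℂ` that forces `Φ a` to vanish on `ker P` and to have
range orthogonal to it, i.e. `Φ a = P Φ(a) P`. From `S* P S = P` and invertibility of `S`,
`V = P S` satisfies `V* V = V V* = P`, so `U = V + (1 - P)` is unitary, and `P U = V` gives
`U* Φ(a) U = V* Φ(a) V = S* Φ(a) S`.
-/

open scoped InnerProductSpace ComplexConjugate

namespace Complex

theorem eq_zero_of_forall_nonneg_ofReal_mul_add {D γ : ℂ} (h : ∀ s : ℝ, 0 ≤ (s : ℂ) * D + γ) :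
    D = 0 := by
  have hre : ∀ s : ℝ, 0 ≤ s * D.re + γ.re := fun s => by simpa using (le_def.mp (h s)).1
  have him : ∀ s : ℝ, s * D.im + γ.im = 0 := fun s => by simpa using (le_def.mp (h s)).2.symm
  refine ext ?_ ?_
  · by_contra hD
    have := hre ((-γ.re - 1) / D.re)
    rw [div_mul_cancel₀ _ hD] at this
    linarith
  · simpa using sub_eq_zero.mpr ((him 1).trans (him 0).symm)

theorem eq_zero_of_forall_nonneg_conj_mul_add_mul_add {α β γ : ℂ}
    (h : ∀ t : ℂ, 0 ≤ conj t * α + t * β + γ) : α = 0 ∧ β = 0 := by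
  have hsum : α + β = 0 := eq_zero_of_forall_nonneg_ofReal_mul_add fun s => by
    simpa [conj_ofReal, mul_add] using h s
  have hdiff : I * (β - α) = 0 := eq_zero_of_forall_nonneg_ofReal_mul_add fun s => by
    convert h (s * I) using 2
    simp only [map_mul, conj_ofReal, conj_I]
    ring
  have hβα : β = α := sub_eq_zero.mp ((mul_eq_zero.mp hdiff).resolve_left I_ne_zero)
  subst hβα
  exact ⟨by linear_combination hsum / 2, by linear_combination hsum / 2⟩

end Complex

@[simp]
theorem conjAd_apply {H : Type*} [NormedAddCommGroup H] [InnerProductSpace ℂ H] [CompleteSpace H]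
    (T X : H →L[ℂ] H) : conjAd T X = star T * X * T :=
  rfl

namespace IsCPMap

variable {A H : Type*} [NormedAddCommGroup H] [InnerProductSpace ℂ H] [Ring A] [StarRing A]
  [Algebra ℂ A] {Φ : A →ₗ[ℂ] (H →L[ℂ] H)}

theorem inner_map_eq_zero_of_map_one_apply_eq_zero (hΦ : IsCPMap Φ) {x : H} (hx : Φ 1 x = 0)
    (b : A) (y : H) : ⟪x, Φ b y⟫_ℂ = 0 ∧ ⟪y, Φ (star b) x⟫_ℂ = 0 := by
  refine Complex.eq_zero_of_forall_nonneg_conj_mul_add_mul_add (γ := ⟪y, Φ (star b * b) y⟫_ℂ)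
    fun t => ?_
  have := hΦ 2 ![1, b] ![t • x, y]
  simp only [Fin.sum_univ_two, Matrix.cons_val_zero, Matrix.cons_val_one,
    star_one, one_mul, mul_one, map_smul, inner_smul_left, inner_smul_right,
    hx, inner_zero_right, mul_zero, zero_add] at this
  exact this.trans_eq (by ring)

theorem map_apply_eq_zero_of_map_one_apply_eq_zero (hΦ : IsCPMap Φ) {x : H} (hx : Φ 1 x = 0)
    (a : A) : Φ a x = 0 := by
  simpa using (hΦ.inner_map_eq_zero_of_map_one_apply_eq_zero hx (star a) (Φ a x)).2

end IsCPMap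

theorem IsStarProjection.mul_mul_self_eq_of_ker {𝕜 E : Type*} [RCLike 𝕜] [NormedAddCommGroup E]
    [InnerProductSpace 𝕜 E] [CompleteSpace E] {P T : E →L[𝕜] E} (hP : IsStarProjection P)
    (hker : ∀ x, P x = 0 → T x = 0) (hperp : ∀ x y, P x = 0 → ⟪x, T y⟫_𝕜 = 0) :
    P * T * P = T := by
  have hP_sub : ∀ x, P (x - P x) = 0 := fun x => by
    rw [map_sub, ← mul_apply_eq_comp, hP.isIdempotentElem.eq, sub_self]
  have hright : T * P = T := ContinuousLinearMap.ext fun z => by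
    have := hker _ (hP_sub z)
    rw [map_sub, sub_eq_zero] at this
    rw [mul_apply_eq_comp, ← this]
  have hleft : P * T = T := ContinuousLinearMap.ext fun z => ext_inner_left 𝕜 fun v => by
    have := hperp _ z (hP_sub v)
    rw [inner_sub_left, sub_eq_zero] at this
    rw [mul_apply_eq_comp, this]
    exact (hP.isSelfAdjoint.isSymmetric v (T z)).symm
  rw [mul_assoc, hright, hleft]

theorem IsCPMap.map_one_mul_map_mul_map_one {A H : Type*} [NormedAddCommGroup H]
    [InnerProductSpace ℂ H] [CompleteSpace H] [Ring A] [StarRing A] [Algebra ℂ A]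
    {Φ : A →ₗ[ℂ] (H →L[ℂ] H)} (hΦ : IsCPMap Φ) (hP : IsStarProjection (Φ 1)) (a : A) :
    Φ 1 * Φ a * Φ 1 = Φ a :=
  hP.mul_mul_self_eq_of_ker (fun _ hx => hΦ.map_apply_eq_zero_of_map_one_apply_eq_zero hx a)
    fun _ y hx => (hΦ.inner_map_eq_zero_of_map_one_apply_eq_zero hx a y).1

namespace IsStarProjection

variable {R : Type*} [Ring R] [StarRing R] {P : R}

theorem add_one_sub_mem_unitary (hP : IsStarProjection P) {V : R} (hVV : star V * V = P)
    (hVV' : V * star V = P) (hPV : P * V = V) (hVP : V * P = V) : V + (1 - P) ∈ unitary R := by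
  have hsVP : star V * P = star V := by simpa [hP.isSelfAdjoint.star_eq] using congr(star $hPV)
  have hPsV : P * star V = star V := by simpa [hP.isSelfAdjoint.star_eq] using congr(star $hVP)
  have h1P := hP.isIdempotentElem.one_sub.eq
  rw [Unitary.mem_iff, star_add, star_sub, star_one, hP.isSelfAdjoint.star_eq]
  constructor
  · rw [add_mul, mul_add, mul_add, hVV, mul_sub, sub_mul, hsVP, hPV, h1P, mul_one, one_mul]
    abel
  · rw [add_mul, mul_add, mul_add, hVV', mul_sub, sub_mul, hPsV, hVP, h1P, mul_one, one_mul]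
    abel

theorem exists_mem_unitary_star_mul_mul_eq (hP : IsStarProjection P) {S : R} (hS : IsUnit S)
    (hSP : star S * P * S = P) :
    ∃ U ∈ unitary R, ∀ X, P * X * P = X → star U * X * U = star S * X * S := by
  obtain ⟨u, rfl⟩ := hS
  have hP2 := hP.isIdempotentElem.eq
  have hPstar := hP.isSelfAdjoint.star_eq
  have hstar_inv : star (↑u⁻¹ : R) * star (u : R) = 1 := by rw [← star_mul, u.mul_inv, star_one]
  have hPu : P * u = star (↑u⁻¹ : R) * P := by
    calc P * u = star (↑u⁻¹ : R) * star (u : R) * (P * u) := by rw [hstar_inv, one_mul]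
      _ = star (↑u⁻¹ : R) * (star (u : R) * P * u) := by noncomm_ring
      _ = star (↑u⁻¹ : R) * P := by rw [hSP]
  have hsV : star (P * u) = star (u : R) * P := by rw [star_mul, hPstar]
  have hVV : star (P * u) * (P * u) = P :=
    calc star (P * u) * (P * u) = star (u : R) * (P * P) * u := by rw [hsV]; noncomm_ring
      _ = P := by rw [hP2, hSP]
  have hsV' : star (P * u) = P * ↑u⁻¹ := by rw [hPu, star_mul, star_star, hPstar]
  have hVV' : P * u * star (P * u) = P :=
    calc P * u * star (P * u) = star (↑u⁻¹ : R) * (P * P) * ↑u⁻¹ := by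
          rw [hsV', hPu]; noncomm_ring
      _ = star (↑u⁻¹ : R) * (star (u : R) * P * u) * ↑u⁻¹ := by rw [hP2, hSP]
      _ = star (↑u⁻¹ : R) * star (u : R) * P * (u * ↑u⁻¹) := by noncomm_ring
      _ = P := by rw [hstar_inv, u.mul_inv, one_mul, mul_one]
  have hPV : P * (P * u) = P * u := by rw [← mul_assoc, hP2]
  have hVP : P * u * P = P * u := by rw [hPu, mul_assoc, hP2]
  refine ⟨P * u + (1 - P), hP.add_one_sub_mem_unitary hVV hVV' hPV hVP, fun X hX => ?_⟩
  have hPU : P * (P * u + (1 - P)) = P * u := by rw [mul_add, hPV, hP.mul_one_sub_self, add_zero]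
  have hUP : star (P * u + (1 - P)) * P = star (P * u) := by
    simpa only [star_mul, hPstar] using congr(star $hPU)
  calc star (P * u + (1 - P)) * X * (P * u + (1 - P))
      = star (P * u + (1 - P)) * P * X * (P * (P * u + (1 - P))) := by
        conv_lhs => rw [← hX]
        noncomm_ring
    _ = star (u : R) * (P * X * P) * u := by rw [hUP, hPU, hsV]; noncomm_ring
    _ = star (u : R) * X * u := by rw [hX]

end IsStarProjection

theorem stmt16_general {A : Type*} [NormedRing A] [StarRing A] [NormedAlgebra ℂ A]
    {H : Type*} [NormedAddCommGroup H] [InnerProductSpace ℂ H] [CompleteSpace H]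
    (P : H →L[ℂ] H) (hPsa : IsSelfAdjoint P) (hPidem : P * P = P)
    (S : H →L[ℂ] H) (hS : IsUnit S)
    (Φ Ψ : A →ₗ[ℂ] (H →L[ℂ] H)) (hΦ : Φ ∈ CPP (A := A) P) (hΨ : Ψ ∈ CPP (A := A) P)
    (h : Ψ = (conjAd S).comp Φ) :
    ∃ U : H →L[ℂ] H, U ∈ unitary (H →L[ℂ] H) ∧ Ψ = (conjAd U).comp Φ := by
  subst h
  obtain ⟨hΦcp, hΦ1⟩ := hΦ
  have hP : IsStarProjection P := ⟨hPidem, hPsa⟩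
  have hSP : star S * P * S = P := by simpa [hΦ1] using hΨ.2
  obtain ⟨U, hU, hconj⟩ := hP.exists_mem_unitary_star_mul_mul_eq hS hSP
  refine ⟨U, hU, LinearMap.ext fun a => ?_⟩
  have hsupp : P * Φ a * P = Φ a := hΦ1 ▸ hΦcp.map_one_mul_map_mul_map_one (hΦ1 ▸ hP) a
  simp [hconj _ hsupp]

/-- Lemma `lem-proj-unitary`. If `P` is an orthogonal projection, `S` is
invertible, and `Φ, Ψ ∈ CP^{(P)}` satisfy `Ψ = Ad_S ∘ Φ`, then there is a unitary `U` with
`Ψ = Ad_U ∘ Φ`. -/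
theorem stmt16 {A : Type*} [NormedRing A] [StarRing A] [CStarRing A] [NormedAlgebra ℂ A] [StarModule ℂ A] [CompleteSpace A]
    {H : Type*} [NormedAddCommGroup H] [InnerProductSpace ℂ H] [CompleteSpace H]
    (P : H →L[ℂ] H) (hPsa : IsSelfAdjoint P) (hPidem : P * P = P)
    (S : H →L[ℂ] H) (hS : IsUnit S)
    (Φ Ψ : A →ₗ[ℂ] (H →L[ℂ] H)) (hΦ : Φ ∈ CPP (A := A) P) (hΨ : Ψ ∈ CPP (A := A) P)
    (h : Ψ = (conjAd S).comp Φ) :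
    ∃ U : H →L[ℂ] H, U ∈ unitary (H →L[ℂ] H) ∧ Ψ = (conjAd U).comp Φ :=
  stmt16_general P hPsa hPidem S hS Φ Ψ hΦ hΨ h

end
end
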